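/- arXiv:2501.14458 — 6 statements merged into one kernel-verified Lean document; each statement's English description precedes it below -/
import Mathlib

section
/- Let Z be a type of examples and f : ℝ^d × Z → ℝ a loss such that for every ξ ∈ Z the map x ↦ f(x; ξ) is convex, M-Lipschitz, differentiable and L-smooth. Let S = (ξ_1,…,ξ_n) and S' = (ξ'_1,…,ξ'_n) be two n-tuples of examples (n ≥ 1) that agree in all but at most one coordinate. Let I_1,…,I_K be i.i.d. random indices uniformly distributed on {1,…,n}, let step sizes satisfy 0 ≤ α_k ≤ 2/L, and from a common deterministic start x_1 = x'_1 define coupled SGD iterates x_{k+1} = x_k − α_k ∇f(x_k; ξ_{I_k}) and x'_{k+1} = x'_k − α_k ∇f(x'_k; ξ'_{I_k}) for k = 1,…,K. Then for every ξ ∈ Z, E[|f(x_{K+1}; ξ) − f(x'_{K+1}; ξ)|] ≤ (2M²/n) ∑_{k=1}^K α_k. -/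
/-!
For a convex `L`-smooth function the gradient is co-coercive,
`‖∇g a - ∇g b‖² ≤ L ⟪∇g a - ∇g b, a - b⟫`, so a gradient step of size at most `2 / L` is
nonexpansive. Along every sample path the coupled iterates therefore only move apart at the steps
where the differing example `j₀` is drawn, and then by at most `2 M α_k` because gradients are
bounded by `M`. This pathwise bound is a sum of indicators of `{I_k = j₀}`, each of probability
`1 / n`; integrating it and applying the `M`-Lipschitz bound of `f(·; ξ)` gives the claim.
-/

open MeasureTheory ProbabilityTheory InnerProductSpace Set
open scoped Gradient

section GradientStep

variable {E : Type*} [NormedAddCommGroup E] [InnerProductSpace ℝ E] [CompleteSpace E]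
  {g : E → ℝ} {L : ℝ}

theorem hasDerivAt_comp_add_smul {a v : E} {t : ℝ} (hg : DifferentiableAt ℝ g (a + t • v)) :
    HasDerivAt (fun s : ℝ => g (a + s • v)) ⟪∇ g (a + t • v), v⟫_ℝ t := by
  have hline : HasDerivAt (fun s : ℝ => a + s • v) v t := by
    simpa using ((hasDerivAt_id t).smul_const v).const_add a
  rw [inner_gradient_left]
  exact hg.hasFDerivAt.comp_hasDerivAt t hline

theorem norm_gradient_le_of_lipschitz {M : ℝ} (hM : 0 ≤ M)
    (hlip : ∀ x y, |g x - g y| ≤ M * ‖x - y‖) (x : E) : ‖∇ g x‖ ≤ M := by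
  rw [← (toDual ℝ E).norm_map, toDual_gradient]
  exact norm_fderiv_le_of_lip' ℝ hM (Filter.Eventually.of_forall fun y => hlip y x)

theorem ConvexOn.add_inner_gradient_le (hc : ConvexOn ℝ univ g) {a : E}
    (hg : DifferentiableAt ℝ g a) (b : E) : g a + ⟪∇ g a, b - a⟫_ℝ ≤ g b := by
  have hline : ConvexOn ℝ univ (fun t : ℝ => g (a + t • (b - a))) := by
    simpa [Function.comp_def, AffineMap.lineMap_apply, add_comm] using
      hc.comp_affineMap (AffineMap.lineMap a b)
  have hderiv := hasDerivAt_comp_add_smul (t := 0) (v := b - a) (by simpa using hg)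
  have := hline.le_slope_of_hasDerivAt (mem_univ 0) (mem_univ 1) one_pos hderiv
  simp only [slope_def_field, zero_smul, add_zero, one_smul, add_sub_cancel, sub_zero,
    div_one] at this
  linarith

theorem le_add_inner_gradient_add_sq (hg : Differentiable ℝ g)
    (hs : ∀ x y, ‖∇ g x - ∇ g y‖ ≤ L * ‖x - y‖) (a b : E) :
    g b ≤ g a + ⟪∇ g a, b - a⟫_ℝ + L / 2 * ‖b - a‖ ^ 2 := by
  set v := b - a
  let φ : ℝ → ℝ := fun t => g (a + t • v) - t * ⟪∇ g a, v⟫_ℝ - L / 2 * ‖v‖ ^ 2 * t ^ 2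
  have hφ (t : ℝ) :
      HasDerivAt φ (⟪∇ g (a + t • v), v⟫_ℝ - ⟪∇ g a, v⟫_ℝ - L * ‖v‖ ^ 2 * t) t := by
    refine (((hasDerivAt_comp_add_smul (hg _)).sub ((hasDerivAt_id t).mul_const _)).sub
      ((hasDerivAt_pow 2 t).const_mul (L / 2 * ‖v‖ ^ 2))).congr_deriv ?_
    simp only [Nat.cast_ofNat]
    ring
  have hanti : AntitoneOn φ (Ici 0) := by
    refine antitoneOn_of_hasDerivWithinAt_nonpos (convex_Ici 0)
      (fun t _ => (hφ t).continuousAt.continuousWithinAt) (fun t _ => (hφ t).hasDerivWithinAt) ?_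
    intro t ht
    rw [interior_Ici] at ht
    have : ⟪∇ g (a + t • v) - ∇ g a, v⟫_ℝ ≤ L * ‖v‖ ^ 2 * t :=
      calc ⟪∇ g (a + t • v) - ∇ g a, v⟫_ℝ ≤ ‖∇ g (a + t • v) - ∇ g a‖ * ‖v‖ :=
            real_inner_le_norm _ _
        _ ≤ L * ‖t • v‖ * ‖v‖ := by
            gcongr
            simpa using hs (a + t • v) a
        _ = L * ‖v‖ ^ 2 * t := by
            rw [norm_smul, Real.norm_of_nonneg ht.le]
            ring
    rw [inner_sub_left] at this
    linarith
  have := hanti (mem_Ici.2 le_rfl) (mem_Ici.2 zero_le_one) zero_le_one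
  simp only [φ, zero_smul, add_zero, one_smul, zero_mul, sub_zero, one_mul, one_pow,
    mul_one, add_sub_cancel, v] at this
  linarith

theorem ConvexOn.add_inner_gradient_add_sq_le (hc : ConvexOn ℝ univ g)
    (hg : Differentiable ℝ g) (hL : 0 < L) (hs : ∀ x y, ‖∇ g x - ∇ g y‖ ≤ L * ‖x - y‖)
    (a b : E) : g a + ⟪∇ g a, b - a⟫_ℝ + ‖∇ g b - ∇ g a‖ ^ 2 / (2 * L) ≤ g b := by
  set w := ∇ g b - ∇ g a
  -- compare the first-order lower bound with the descent bound at the minimiser of the latter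
  have hlower := hc.add_inner_gradient_le (hg a) (b - L⁻¹ • w)
  have hupper := le_add_inner_gradient_add_sq hg hs b (b - L⁻¹ • w)
  rw [show b - L⁻¹ • w - a = (b - a) - L⁻¹ • w by abel, inner_sub_right,
    real_inner_smul_right] at hlower
  rw [sub_sub_cancel_left, inner_neg_right, norm_neg, real_inner_smul_right, norm_smul,
    Real.norm_of_nonneg (inv_nonneg.2 hL.le)] at hupper
  have hquad : L / 2 * (L⁻¹ * ‖w‖) ^ 2 = L⁻¹ * ‖w‖ ^ 2 - ‖w‖ ^ 2 / (2 * L) := by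
    field_simp
    ring
  have hlin : L⁻¹ * ⟪∇ g b, w⟫_ℝ - L⁻¹ * ⟪∇ g a, w⟫_ℝ = L⁻¹ * ‖w‖ ^ 2 := by
    rw [← mul_sub, ← inner_sub_left, real_inner_self_eq_norm_sq]
  linarith

theorem ConvexOn.sq_norm_gradient_sub_le (hc : ConvexOn ℝ univ g)
    (hg : Differentiable ℝ g) (hL : 0 < L) (hs : ∀ x y, ‖∇ g x - ∇ g y‖ ≤ L * ‖x - y‖)
    (a b : E) : ‖∇ g a - ∇ g b‖ ^ 2 ≤ L * ⟪∇ g a - ∇ g b, a - b⟫_ℝ := by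
  have hab := hc.add_inner_gradient_add_sq_le hg hL hs a b
  have hba := hc.add_inner_gradient_add_sq_le hg hL hs b a
  rw [norm_sub_rev] at hab
  have hinner : ⟪∇ g a - ∇ g b, a - b⟫_ℝ = -⟪∇ g a, b - a⟫_ℝ - ⟪∇ g b, a - b⟫_ℝ := by
    rw [inner_sub_left, ← neg_sub b a, inner_neg_right]
  rw [hinner, ← div_le_iff₀' hL]
  have hhalves : ‖∇ g a - ∇ g b‖ ^ 2 / (2 * L) + ‖∇ g a - ∇ g b‖ ^ 2 / (2 * L)
      = ‖∇ g a - ∇ g b‖ ^ 2 / L := by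
    field_simp
    ring
  linarith

theorem ConvexOn.norm_sub_smul_gradient_sub_le (hc : ConvexOn ℝ univ g)
    (hg : Differentiable ℝ g) (hL : 0 < L) (hs : ∀ x y, ‖∇ g x - ∇ g y‖ ≤ L * ‖x - y‖)
    {α : ℝ} (hα0 : 0 ≤ α) (hα2 : α ≤ 2 / L) (a b : E) :
    ‖(a - α • ∇ g a) - (b - α • ∇ g b)‖ ≤ ‖a - b‖ := by
  have hcoco := hc.sq_norm_gradient_sub_le hg hL hs a b
  have hαL : α * L ≤ 2 := (le_div_iff₀ hL).1 hα2
  have hmono : 0 ≤ ⟪∇ g a - ∇ g b, a - b⟫_ℝ := by nlinarith [sq_nonneg ‖∇ g a - ∇ g b‖]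
  rw [show (a - α • ∇ g a) - (b - α • ∇ g b) = (a - b) - α • (∇ g a - ∇ g b) by
    rw [smul_sub]; abel]
  refine (sq_le_sq₀ (norm_nonneg _) (norm_nonneg _)).1 ?_
  -- with `u = a - b`, `w = ∇g a - ∇g b`: `‖u - α w‖² = ‖u‖² - 2α⟪w, u⟫ + α²‖w‖²`, and
  -- co-coercivity bounds this by `‖u‖² - α (2 - α L) ⟪w, u⟫`
  rw [norm_sub_sq_real, real_inner_smul_right, norm_smul, mul_pow, Real.norm_eq_abs, sq_abs,
    real_inner_comm]
  nlinarith [mul_nonneg hα0 hmono, mul_le_mul_of_nonneg_left hcoco (sq_nonneg α)]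

theorem ConvexOn.norm_sub_smul_gradient_sub_smul_gradient_le (hc : ConvexOn ℝ univ g)
    (hg : Differentiable ℝ g) (hL : 0 < L) (hs : ∀ x y, ‖∇ g x - ∇ g y‖ ≤ L * ‖x - y‖)
    {α : ℝ} (hα0 : 0 ≤ α) (hα2 : α ≤ 2 / L) (h : E → ℝ) (a b : E) :
    ‖(a - α • ∇ g a) - (b - α • ∇ h b)‖ ≤ ‖a - b‖ + α * ‖∇ g b - ∇ h b‖ :=
  calc ‖(a - α • ∇ g a) - (b - α • ∇ h b)‖
      = ‖((a - α • ∇ g a) - (b - α • ∇ g b)) + α • (∇ h b - ∇ g b)‖ := by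
        rw [smul_sub]; congr 1; abel
    _ ≤ ‖a - b‖ + α * ‖∇ g b - ∇ h b‖ := by
        refine (norm_add_le _ _).trans (add_le_add ?_ ?_)
        · exact hc.norm_sub_smul_gradient_sub_le hg hL hs hα0 hα2 a b
        · rw [norm_smul, Real.norm_of_nonneg hα0, norm_sub_rev]

theorem norm_gradient_step_sub_le_indicator {Z : Type*} {f : E → Z → ℝ} {M : ℝ} {n : ℕ}
    {S S' : Fin n → Z} {j₀ : Fin n} (hconv : ∀ ξ, ConvexOn ℝ univ (fun x => f x ξ))
    (hdiff : ∀ ξ, Differentiable ℝ (fun x => f x ξ)) (hL : 0 < L)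
    (hsmooth : ∀ ξ x y, ‖∇ (fun z => f z ξ) x - ∇ (fun z => f z ξ) y‖ ≤ L * ‖x - y‖)
    (hM : 0 ≤ M) (hlip : ∀ ξ x y, |f x ξ - f y ξ| ≤ M * ‖x - y‖)
    (hSS' : ∀ i, i ≠ j₀ → S i = S' i) {α : ℝ} (hα0 : 0 ≤ α) (hα2 : α ≤ 2 / L)
    (i : Fin n) (a b : E) :
    ‖(a - α • ∇ (fun z => f z (S i)) a) - (b - α • ∇ (fun z => f z (S' i)) b)‖
      ≤ ‖a - b‖ + ({j₀} : Set (Fin n)).indicator (fun _ => 2 * M * α) i := by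
  refine ((hconv _).norm_sub_smul_gradient_sub_smul_gradient_le (hdiff _) hL (hsmooth _)
    hα0 hα2 _ a b).trans (add_le_add le_rfl ?_)
  by_cases hi : i = j₀
  · rw [indicator_of_mem (mem_singleton_iff.2 hi)]
    refine (mul_le_mul_of_nonneg_left (norm_sub_le_of_le
      (norm_gradient_le_of_lipschitz hM (hlip _) _)
      (norm_gradient_le_of_lipschitz hM (hlip _) _)) hα0).trans_eq ?_
    ring
  · rw [indicator_of_notMem (mt mem_singleton_iff.1 hi), hSS' i hi, sub_self, norm_zero,
      mul_zero]

end GradientStep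

theorem le_add_sum_Icc_of_succ_le_add {u c : ℕ → ℝ} {K : ℕ}
    (hstep : ∀ k, 1 ≤ k → k ≤ K → u (k + 1) ≤ u k + c k) :
    u (K + 1) ≤ u 1 + ∑ k ∈ Finset.Icc 1 K, c k := by
  induction K with
  | zero => simp
  | succ K ih =>
    rw [Finset.sum_Icc_succ_top (by omega)]
    linarith [ih fun k hk hkK => hstep k hk (by omega), hstep (K + 1) (by omega) le_rfl]

theorem integral_indicator_singleton_comp_of_uniform {Ω : Type*} {mΩ : MeasurableSpace Ω}
    {P : Measure Ω} {n : ℕ} {I : Ω → Fin n} (hI : Measurable I) {j : Fin n}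
    (hunif : P {ω | I ω = j} = (n : ENNReal)⁻¹) (c : ℝ) :
    ∫ ω, ({j} : Set (Fin n)).indicator (fun _ => c) (I ω) ∂P = c / n := by
  have hmeas : MeasurableSet {ω | I ω = j} := hI (measurableSet_singleton j)
  rw [show (fun ω => ({j} : Set (Fin n)).indicator (fun _ => c) (I ω))
      = {ω | I ω = j}.indicator fun _ => c from rfl,
    integral_indicator_const _ hmeas, measureReal_def, hunif,
    ENNReal.toReal_inv, ENNReal.toReal_natCast, smul_eq_mul, inv_mul_eq_div]

theorem sgd_stability_convex_general {d : ℕ} {Z : Type*}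
    (f : EuclideanSpace ℝ (Fin d) → Z → ℝ) (M L : ℝ) (hM : 0 < M) (hL : 0 < L)
    (hconv : ∀ ξ, ConvexOn ℝ Set.univ (fun x => f x ξ))
    (hlip : ∀ ξ x y, |f x ξ - f y ξ| ≤ M * ‖x - y‖)
    (hdiff : ∀ ξ, Differentiable ℝ (fun x => f x ξ))
    (hsmooth : ∀ ξ x y,
      ‖gradient (fun z => f z ξ) x - gradient (fun z => f z ξ) y‖ ≤ L * ‖x - y‖)
    (n : ℕ) (S S' : Fin n → Z)
    (j₀ : Fin n) (hSS' : ∀ i, i ≠ j₀ → S i = S' i)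
    {Ω : Type*} {mΩ : MeasurableSpace Ω} (P : Measure Ω) [IsProbabilityMeasure P]
    (I : ℕ → Ω → Fin n)
    (hI_meas : ∀ k, Measurable (I k))
    (hI_unif : ∀ k (i : Fin n), P {ω | I k ω = i} = (n : ENNReal)⁻¹)
    (K : ℕ) (α : ℕ → ℝ) (hα0 : ∀ k, 0 ≤ α k) (hα2 : ∀ k, α k ≤ 2 / L)
    (x x' : ℕ → Ω → EuclideanSpace ℝ (Fin d)) (x1 : EuclideanSpace ℝ (Fin d))
    (hx1 : ∀ ω, x 1 ω = x1) (hx1' : ∀ ω, x' 1 ω = x1)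
    (hrec : ∀ k, 1 ≤ k → k ≤ K → ∀ ω,
      x (k + 1) ω = x k ω - α k • gradient (fun z => f z (S (I k ω))) (x k ω))
    (hrec' : ∀ k, 1 ≤ k → k ≤ K → ∀ ω,
      x' (k + 1) ω = x' k ω - α k • gradient (fun z => f z (S' (I k ω))) (x' k ω)) :
    ∀ ξ : Z, ∫ ω, |f (x (K + 1) ω) ξ - f (x' (K + 1) ω) ξ| ∂P
      ≤ (2 * M ^ 2 / n) * ∑ k ∈ Finset.Icc 1 K, α k := by
  intro ξ
  let bump (k : ℕ) (ω : Ω) : ℝ := ({j₀} : Set (Fin n)).indicator (fun _ => 2 * M * α k) (I k ω)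
  have hdist (ω : Ω) : ‖x (K + 1) ω - x' (K + 1) ω‖ ≤ ∑ k ∈ Finset.Icc 1 K, bump k ω := by
    simpa [hx1, hx1'] using le_add_sum_Icc_of_succ_le_add (u := fun k => ‖x k ω - x' k ω‖)
      (c := fun k => bump k ω) fun k hk hkK => by
        rw [hrec k hk hkK, hrec' k hk hkK]
        exact norm_gradient_step_sub_le_indicator hconv hdiff hL hsmooth hM.le hlip hSS'
          (hα0 k) (hα2 k) _ _ _
  have hbump_int (k : ℕ) : Integrable (bump k) P :=
    (integrable_const _).indicator (hI_meas k (measurableSet_singleton j₀))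
  calc ∫ ω, |f (x (K + 1) ω) ξ - f (x' (K + 1) ω) ξ| ∂P
      ≤ ∫ ω, M * ∑ k ∈ Finset.Icc 1 K, bump k ω ∂P :=
        integral_mono_of_nonneg (.of_forall fun _ => abs_nonneg _)
          ((integrable_finsetSum _ fun k _ => hbump_int k).const_mul M)
          (.of_forall fun ω => (hlip ξ _ _).trans (mul_le_mul_of_nonneg_left (hdist ω) hM.le))
    _ = M * ∑ k ∈ Finset.Icc 1 K, 2 * M * α k / n := by
        rw [integral_const_mul, integral_finsetSum _ fun k _ => hbump_int k]
        simp only [bump, integral_indicator_singleton_comp_of_uniform (hI_meas _) (hI_unif _ j₀)]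
    _ = (2 * M ^ 2 / n) * ∑ k ∈ Finset.Icc 1 K, α k := by
        rw [← Finset.sum_div, ← Finset.mul_sum]
        ring

/-- Uniform stability of SGD for convex, `M`-Lipschitz, `L`-smooth losses:
coupled SGD runs on neighboring datasets `S`, `S'` satisfy
`E[|f(x_{K+1}; ξ) − f(x'_{K+1}; ξ)|] ≤ (2M²/n) ∑_{k=1}^K α_k`. -/
theorem sgd_stability_convex {d : ℕ} {Z : Type*}
    (f : EuclideanSpace ℝ (Fin d) → Z → ℝ) (M L : ℝ) (hM : 0 < M) (hL : 0 < L)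
    (hconv : ∀ ξ, ConvexOn ℝ Set.univ (fun x => f x ξ))
    (hlip : ∀ ξ x y, |f x ξ - f y ξ| ≤ M * ‖x - y‖)
    (hdiff : ∀ ξ, Differentiable ℝ (fun x => f x ξ))
    (hsmooth : ∀ ξ x y,
      ‖gradient (fun z => f z ξ) x - gradient (fun z => f z ξ) y‖ ≤ L * ‖x - y‖)
    (n : ℕ) (hn : 1 ≤ n) (S S' : Fin n → Z)
    (j₀ : Fin n) (hSS' : ∀ i, i ≠ j₀ → S i = S' i)
    {Ω : Type*} {mΩ : MeasurableSpace Ω} (P : Measure Ω) [IsProbabilityMeasure P]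
    (I : ℕ → Ω → Fin n)
    (hI_meas : ∀ k, Measurable (I k))
    (hI_indep : iIndepFun I P)
    (hI_unif : ∀ k (i : Fin n), P {ω | I k ω = i} = (n : ENNReal)⁻¹)
    (K : ℕ) (α : ℕ → ℝ) (hα0 : ∀ k, 0 ≤ α k) (hα2 : ∀ k, α k ≤ 2 / L)
    (x x' : ℕ → Ω → EuclideanSpace ℝ (Fin d)) (x1 : EuclideanSpace ℝ (Fin d))
    (hx1 : ∀ ω, x 1 ω = x1) (hx1' : ∀ ω, x' 1 ω = x1)
    (hrec : ∀ k, 1 ≤ k → k ≤ K → ∀ ω,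
      x (k + 1) ω = x k ω - α k • gradient (fun z => f z (S (I k ω))) (x k ω))
    (hrec' : ∀ k, 1 ≤ k → k ≤ K → ∀ ω,
      x' (k + 1) ω = x' k ω - α k • gradient (fun z => f z (S' (I k ω))) (x' k ω)) :
    ∀ ξ : Z, ∫ ω, |f (x (K + 1) ω) ξ - f (x' (K + 1) ω) ξ| ∂P
      ≤ (2 * M ^ 2 / n) * ∑ k ∈ Finset.Icc 1 K, α k :=
  sgd_stability_convex_general f M L hM hL hconv hlip hdiff hsmooth n S S' j₀ hSS' (mΩ := mΩ) P I
    hI_meas hI_unif K α hα0 hα2 x x' x1 hx1 hx1' hrec hrec'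
end

section
/- Let 0 < β₂ ≤ 1, 0 ≤ β₁ < β₂, ε > 0, and let (a_j)_{j≥1} be a sequence of real numbers. Define b_k = ∑_{j=1}^k β₂^{k−j} a_j² and c_k = ∑_{j=1}^k β₁^{k−j} a_j. Then for every n ≥ 1, ∑_{j=1}^n c_j²/(ε + b_j) ≤ (1/((1 − β₁)(1 − β₁/β₂))) · ( ln(1 + b_n/ε) − n·ln β₂ ). -/
private lemma sumIccRange (f : ℕ → ℝ) (j n : ℕ) :
    ∑ k ∈ Finset.Icc j n, f k = ∑ i ∈ Finset.range (n + 1 - j), f (j + i) := by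
  induction n with
  | zero =>
    rcases Nat.eq_zero_or_pos j with rfl | hj
    · simp
    · rw [Finset.Icc_eq_empty (by omega), show 0 + 1 - j = 0 by omega]; simp
  | succ n ih =>
    rcases le_or_gt j (n + 1) with hj | hj
    · rw [Finset.sum_Icc_succ_top hj, ih, show n + 1 + 1 - j = (n + 1 - j) + 1 by omega,
        Finset.sum_range_succ, show j + (n + 1 - j) = n + 1 by omega]
    · rw [Finset.Icc_eq_empty (by omega), show n + 1 + 1 - j = 0 by omega]; simp

private lemma geomBound {r : ℝ} (h0 : 0 ≤ r) (h1 : r < 1) (m : ℕ) :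
    ∑ i ∈ Finset.range m, r ^ i ≤ 1 / (1 - r) := by
  rw [geom_sum_eq (by linarith : r ≠ 1)]
  have h2 : (r ^ m - 1) / (r - 1) = (1 - r ^ m) / (1 - r) := by
    rw [div_eq_div_iff (by linarith) (by linarith)]; ring
  rw [h2]
  apply div_le_div_of_nonneg_right ?_ (by linarith)
  nlinarith [pow_nonneg h0 m]

/-- Sum of ratios of the square of a decayed sum and a decayed sum of
squares: with `b_k = ∑_{j=1}^k β₂^{k−j} a_j²` and `c_k = ∑_{j=1}^k β₁^{k−j} a_j`,
`∑_{j=1}^n c_j²/(ε + b_j) ≤ (1/((1−β₁)(1−β₁/β₂)))·(ln(1 + b_n/ε) − n ln β₂)`. -/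
theorem sum_ratio_decayed (β₁ β₂ ε : ℝ) (hβ₁ : 0 ≤ β₁) (hβ₁₂ : β₁ < β₂) (hβ₂ : β₂ ≤ 1)
    (hε : 0 < ε) (a b c : ℕ → ℝ)
    (hb : ∀ k, b k = ∑ j ∈ Finset.Icc 1 k, β₂ ^ (k - j) * a j ^ 2)
    (hc : ∀ k, c k = ∑ j ∈ Finset.Icc 1 k, β₁ ^ (k - j) * a j)
    (n : ℕ) (hn : 1 ≤ n) :
    ∑ j ∈ Finset.Icc 1 n, c j ^ 2 / (ε + b j)
      ≤ (1 / ((1 - β₁) * (1 - β₁ / β₂)))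
          * (Real.log (1 + b n / ε) - n * Real.log β₂) := by
  have hβ₂0 : 0 < β₂ := lt_of_le_of_lt hβ₁ hβ₁₂
  have hβ₁1 : β₁ < 1 := lt_of_lt_of_le hβ₁₂ hβ₂
  have hr0 : 0 ≤ β₁ / β₂ := div_nonneg hβ₁ hβ₂0.le
  have hr1 : β₁ / β₂ < 1 := (div_lt_one hβ₂0).2 hβ₁₂
  have hbnn : ∀ k, 0 ≤ b k := by
    intro k; rw [hb]
    exact Finset.sum_nonneg fun j _ => mul_nonneg (pow_nonneg hβ₂0.le _) (sq_nonneg _)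
  have hB : ∀ k, 0 < ε + b k := fun k => by have := hbnn k; linarith
  have hb0 : b 0 = 0 := by rw [hb]; simp
  have hbrec : ∀ k, b (k + 1) = β₂ * b k + a (k + 1) ^ 2 := by
    intro k
    rw [hb, hb, Finset.sum_Icc_succ_top (by omega : 1 ≤ k + 1), Finset.mul_sum]
    congr 1
    · apply Finset.sum_congr rfl
      intro j hj
      simp only [Finset.mem_Icc] at hj
      rw [show k + 1 - j = (k - j) + 1 by omega, pow_succ]
      ring
    · simp
  have hmono : ∀ j d, β₂ ^ d * b j ≤ b (j + d) := by
    intro j d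
    induction d with
    | zero => simp
    | succ d ih =>
      rw [show j + (d + 1) = (j + d) + 1 by omega, hbrec, pow_succ]
      nlinarith [sq_nonneg (a (j + d + 1)), mul_le_mul_of_nonneg_left ih hβ₂0.le]
  have hBle : ∀ j k, j ≤ k → β₂ ^ (k - j) * (ε + b j) ≤ ε + b k := by
    intro j k hjk
    have h1 : β₂ ^ (k - j) * b j ≤ b k := by
      have := hmono j (k - j); rwa [show j + (k - j) = k by omega] at this
    have h2 : β₂ ^ (k - j) * ε ≤ ε := by
      nlinarith [pow_le_one₀ hβ₂0.le hβ₂ (n := k - j)]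
    nlinarith
  -- logarithmic per-step bound
  have hlog : ∀ j, a (j + 1) ^ 2 / (ε + b (j + 1))
      ≤ Real.log (ε + b (j + 1)) - Real.log (ε + b j) - Real.log β₂ := by
    intro j
    have hxpos : 0 < ε + b (j + 1) := hB _
    have hypos : 0 < ε + β₂ * b j := by nlinarith [hbnn j]
    have hxy : ε + b (j + 1) = (ε + β₂ * b j) + a (j + 1) ^ 2 := by rw [hbrec]; ring
    have h1 : a (j + 1) ^ 2 / (ε + b (j + 1))
        ≤ Real.log (ε + b (j + 1)) - Real.log (ε + β₂ * b j) := by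
      have hlt : Real.log ((ε + β₂ * b j) / (ε + b (j + 1)))
          ≤ (ε + β₂ * b j) / (ε + b (j + 1)) - 1 :=
        Real.log_le_sub_one_of_pos (by positivity)
      rw [Real.log_div hypos.ne' hxpos.ne'] at hlt
      have heq : a (j + 1) ^ 2 / (ε + b (j + 1)) = 1 - (ε + β₂ * b j) / (ε + b (j + 1)) := by
        field_simp
        linarith
      rw [heq]; linarith
    have h2 : Real.log β₂ + Real.log (ε + b j) ≤ Real.log (ε + β₂ * b j) := by
      rw [← Real.log_mul hβ₂0.ne' (hB j).ne']
      apply Real.log_le_log (mul_pos hβ₂0 (hB j))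
      nlinarith [hbnn j]
    linarith
  -- telescoping
  have htel : ∑ j ∈ Finset.Icc 1 n, a j ^ 2 / (ε + b j)
      ≤ Real.log (1 + b n / ε) - n * Real.log β₂ := by
    have h1 : ∑ j ∈ Finset.Icc 1 n, a j ^ 2 / (ε + b j)
        ≤ ∑ i ∈ Finset.range n,
            (Real.log (ε + b (i + 1)) - Real.log (ε + b i) - Real.log β₂) := by
      rw [sumIccRange (fun j => a j ^ 2 / (ε + b j)) 1 n, show n + 1 - 1 = n by omega]
      apply Finset.sum_le_sum
      intro i _
      simpa [add_comm 1 i] using hlog i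
    have h2 : ∑ i ∈ Finset.range n,
        (Real.log (ε + b (i + 1)) - Real.log (ε + b i) - Real.log β₂)
        = Real.log (ε + b n) - Real.log (ε + b 0) - n * Real.log β₂ := by
      rw [Finset.sum_sub_distrib, Finset.sum_range_sub (fun i => Real.log (ε + b i)),
        Finset.sum_const, Finset.card_range, nsmul_eq_mul]
    have h3 : Real.log (1 + b n / ε) = Real.log (ε + b n) - Real.log ε := by
      rw [show 1 + b n / ε = (ε + b n) / ε by field_simp, Real.log_div (hB n).ne' hε.ne']
    rw [h3]
    rw [h2, hb0, add_zero] at h1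
    linarith
  -- Cauchy–Schwarz
  have hCS : ∀ k, c k ^ 2 ≤ (∑ j ∈ Finset.Icc 1 k, β₁ ^ (k - j))
      * (∑ j ∈ Finset.Icc 1 k, β₁ ^ (k - j) * a j ^ 2) := by
    intro k
    rw [hc]
    calc (∑ j ∈ Finset.Icc 1 k, β₁ ^ (k - j) * a j) ^ 2
        = (∑ j ∈ Finset.Icc 1 k,
            Real.sqrt (β₁ ^ (k - j)) * (Real.sqrt (β₁ ^ (k - j)) * a j)) ^ 2 := by
          congr 1
          apply Finset.sum_congr rfl
          intro j _
          rw [← mul_assoc, Real.mul_self_sqrt (pow_nonneg hβ₁ _)]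
      _ ≤ (∑ j ∈ Finset.Icc 1 k, Real.sqrt (β₁ ^ (k - j)) ^ 2)
            * (∑ j ∈ Finset.Icc 1 k, (Real.sqrt (β₁ ^ (k - j)) * a j) ^ 2) :=
          Finset.sum_mul_sq_le_sq_mul_sq _ _ _
      _ = (∑ j ∈ Finset.Icc 1 k, β₁ ^ (k - j))
            * (∑ j ∈ Finset.Icc 1 k, β₁ ^ (k - j) * a j ^ 2) := by
          congr 1 <;> apply Finset.sum_congr rfl <;> intro j _
          · exact Real.sq_sqrt (pow_nonneg hβ₁ _)
          · rw [mul_pow, Real.sq_sqrt (pow_nonneg hβ₁ _)]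
  have hgeom1 : ∀ k, ∑ j ∈ Finset.Icc 1 k, β₁ ^ (k - j) ≤ 1 / (1 - β₁) := by
    intro k
    rw [sumIccRange (fun j => β₁ ^ (k - j)) 1 k, show k + 1 - 1 = k by omega]
    have : ∑ i ∈ Finset.range k, β₁ ^ (k - (1 + i)) = ∑ i ∈ Finset.range k, β₁ ^ i := by
      rw [← Finset.sum_range_reflect (fun i => β₁ ^ i) k]
      apply Finset.sum_congr rfl
      intro i hi
      simp only [Finset.mem_range] at hi
      congr 1
      omega
    rw [this]
    exact geomBound hβ₁ hβ₁1 k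
  -- per-k bound
  have hk : ∀ k, c k ^ 2 / (ε + b k)
      ≤ (1 / (1 - β₁)) * ∑ j ∈ Finset.Icc 1 k, (β₁ / β₂) ^ (k - j) * (a j ^ 2 / (ε + b j)) := by
    intro k
    have hS2 : 0 ≤ ∑ j ∈ Finset.Icc 1 k, β₁ ^ (k - j) * a j ^ 2 :=
      Finset.sum_nonneg fun j _ => mul_nonneg (pow_nonneg hβ₁ _) (sq_nonneg _)
    have h1 : c k ^ 2 ≤ (1 / (1 - β₁)) * ∑ j ∈ Finset.Icc 1 k, β₁ ^ (k - j) * a j ^ 2 :=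
      (hCS k).trans (mul_le_mul_of_nonneg_right (hgeom1 k) hS2)
    have h2 : c k ^ 2 / (ε + b k)
        ≤ ((1 / (1 - β₁)) * ∑ j ∈ Finset.Icc 1 k, β₁ ^ (k - j) * a j ^ 2) / (ε + b k) := by
      exact div_le_div_of_nonneg_right h1 (hB k).le
    refine h2.trans ?_
    rw [mul_div_assoc, Finset.sum_div]
    apply mul_le_mul_of_nonneg_left _ (one_div_nonneg.2 (by linarith : (0:ℝ) ≤ 1 - β₁))
    apply Finset.sum_le_sum
    intro j hj
    simp only [Finset.mem_Icc] at hj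
    have hjk : j ≤ k := hj.2
    have hpow : 0 < β₂ ^ (k - j) := pow_pos hβ₂0 _
    have hrhs : (β₁ / β₂) ^ (k - j) * (a j ^ 2 / (ε + b j))
        = β₁ ^ (k - j) * a j ^ 2 / (β₂ ^ (k - j) * (ε + b j)) := by
      rw [div_pow]
      field_simp
    rw [hrhs]
    gcongr β₁ ^ (k - j) * a j ^ 2 / ?_
    · exact mul_pos hpow (hB j)
    · exact hBle j k hjk
  -- assemble
  have hswap : ∑ k ∈ Finset.Icc 1 n,
        ∑ j ∈ Finset.Icc 1 k, (β₁ / β₂) ^ (k - j) * (a j ^ 2 / (ε + b j))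
      = ∑ j ∈ Finset.Icc 1 n,
        ∑ k ∈ Finset.Icc j n, (β₁ / β₂) ^ (k - j) * (a j ^ 2 / (ε + b j)) := by
    apply Finset.sum_comm'
    intro k j
    simp only [Finset.mem_Icc]
    omega
  have hinner : ∀ j, ∑ k ∈ Finset.Icc j n, (β₁ / β₂) ^ (k - j) * (a j ^ 2 / (ε + b j))
      ≤ (1 / (1 - β₁ / β₂)) * (a j ^ 2 / (ε + b j)) := by
    intro j
    have hT : 0 ≤ a j ^ 2 / (ε + b j) := div_nonneg (sq_nonneg _) (hB j).le
    rw [← Finset.sum_mul]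
    apply mul_le_mul_of_nonneg_right _ hT
    rw [sumIccRange (fun k => (β₁ / β₂) ^ (k - j)) j n]
    calc ∑ i ∈ Finset.range (n + 1 - j), (β₁ / β₂) ^ (j + i - j)
        = ∑ i ∈ Finset.range (n + 1 - j), (β₁ / β₂) ^ i := by
          apply Finset.sum_congr rfl; intro i _; congr 1; omega
      _ ≤ 1 / (1 - β₁ / β₂) := geomBound hr0 hr1 _
  have main : ∑ j ∈ Finset.Icc 1 n, c j ^ 2 / (ε + b j)
      ≤ (1 / (1 - β₁)) * ((1 / (1 - β₁ / β₂)) * ∑ j ∈ Finset.Icc 1 n, a j ^ 2 / (ε + b j)) := by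
    calc ∑ j ∈ Finset.Icc 1 n, c j ^ 2 / (ε + b j)
        ≤ ∑ k ∈ Finset.Icc 1 n, (1 / (1 - β₁))
            * ∑ j ∈ Finset.Icc 1 k, (β₁ / β₂) ^ (k - j) * (a j ^ 2 / (ε + b j)) :=
          Finset.sum_le_sum fun k _ => hk k
      _ = (1 / (1 - β₁)) * ∑ k ∈ Finset.Icc 1 n,
            ∑ j ∈ Finset.Icc 1 k, (β₁ / β₂) ^ (k - j) * (a j ^ 2 / (ε + b j)) := by
          rw [Finset.mul_sum]
      _ ≤ (1 / (1 - β₁)) * ∑ j ∈ Finset.Icc 1 n,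
            (1 / (1 - β₁ / β₂)) * (a j ^ 2 / (ε + b j)) := by
          apply mul_le_mul_of_nonneg_left _ (one_div_nonneg.2 (by linarith : (0:ℝ) ≤ 1 - β₁))
          rw [hswap]
          exact Finset.sum_le_sum fun j _ => hinner j
      _ = (1 / (1 - β₁)) * ((1 / (1 - β₁ / β₂)) * ∑ j ∈ Finset.Icc 1 n, a j ^ 2 / (ε + b j)) := by
          simp only [Finset.mul_sum]
  have hKeq : (1 / (1 - β₁)) * (1 / (1 - β₁ / β₂)) = 1 / ((1 - β₁) * (1 - β₁ / β₂)) := by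
    rw [div_mul_div_comm, one_mul]
  calc ∑ j ∈ Finset.Icc 1 n, c j ^ 2 / (ε + b j)
      ≤ (1 / (1 - β₁)) * ((1 / (1 - β₁ / β₂)) * ∑ j ∈ Finset.Icc 1 n, a j ^ 2 / (ε + b j)) :=
        main
    _ = (1 / ((1 - β₁) * (1 - β₁ / β₂))) * ∑ j ∈ Finset.Icc 1 n, a j ^ 2 / (ε + b j) := by
        rw [← mul_assoc, hKeq]
    _ ≤ (1 / ((1 - β₁) * (1 - β₁ / β₂)))
          * (Real.log (1 + b n / ε) - n * Real.log β₂) := by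
        exact mul_le_mul_of_nonneg_left htel
          (one_div_nonneg.2 (mul_nonneg (by linarith) (by linarith)))
end

section
/- For every real number a with 0 < a < 1 and every natural number Q, ∑_{q=0}^{Q−1} a^q √(q+1) ≤ (1/(1 − a)) · (1 + √π/(2√(−ln a))), and this quantity is at most 2/(1 − a)^{3/2}. -/
/-!
Summation by parts gives `(1 - a) ∑_{q<Q} a^q √(q+1) = ∑_{q<Q} a^q (√(q+1) - √q) - a^Q √Q`.
The `q = 0` term is `1`. For `q ≥ 1`, concavity of `√` gives `√(q+1) - √q ≤ √q - √(q-1)`, and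
with `b = -log a` we have `a^q = e^{-bq} ≤ e^{-bs²}` for `s ≤ √q`, so
`a^q (√q - √(q-1)) ≤ ∫_{√(q-1)}^{√q} e^{-bs²} ds`. Summing, the remaining terms are bounded by the
half-line Gaussian integral `√π / (2√b)`. The second inequality follows from `√π ≤ 2` and
`-log a ≥ 1 - a`.
-/

open Finset MeasureTheory Real Set

theorem one_sub_mul_sum_range_pow_mul_add_pow_mul {R : Type*} [CommRing R] (a : R)
    (f : ℕ → R) (Q : ℕ) :
    (1 - a) * ∑ q ∈ range Q, a ^ q * f (q + 1) + a ^ Q * f Q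
      = f 0 + ∑ q ∈ range Q, a ^ q * (f (q + 1) - f q) := by
  induction Q with
  | zero => simp
  | succ Q ih => rw [sum_range_succ, sum_range_succ, ← add_assoc, ← ih]; ring

theorem Real.sqrt_add_two_sub_sqrt_add_one_le {x : ℝ} (hx : 0 ≤ x) :
    √(x + 2) - √(x + 1) ≤ √(x + 1) - √x := by
  have hu := sq_sqrt hx
  have hv := sq_sqrt (by linarith : 0 ≤ x + 1)
  have hw := sq_sqrt (by linarith : 0 ≤ x + 2)
  nlinarith [sqrt_nonneg x, sqrt_nonneg (x + 1), sqrt_nonneg (x + 2),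
    sq_nonneg (√(x + 2) - √x)]

theorem exp_neg_mul_mul_sqrt_sub_le_integral {b : ℝ} (hb : 0 ≤ b) (n : ℕ) :
    exp (-b * (n + 1)) * (√(n + 1) - √n) ≤ ∫ s in √n..√(n + 1), exp (-b * s ^ 2) := by
  have hle : √n ≤ √(n + 1) := sqrt_le_sqrt (by linarith)
  calc exp (-b * (n + 1)) * (√(n + 1) - √n) = ∫ _ in √n..√(n + 1), exp (-b * (n + 1)) := by
        rw [intervalIntegral.integral_const, smul_eq_mul, mul_comm]
    _ ≤ ∫ s in √n..√(n + 1), exp (-b * s ^ 2) := by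
        refine intervalIntegral.integral_mono_on hle intervalIntegrable_const
          ((by fun_prop : Continuous fun s : ℝ => exp (-b * s ^ 2)).intervalIntegrable _ _)
          fun s hs => exp_le_exp.mpr ?_
        have : s ^ 2 ≤ n + 1 := by
          calc s ^ 2 ≤ √(n + 1) ^ 2 := pow_le_pow_left₀ ((sqrt_nonneg _).trans hs.1) hs.2 2
            _ = n + 1 := sq_sqrt (by positivity)
        nlinarith

theorem sum_exp_neg_mul_mul_sqrt_sub_le {b : ℝ} (hb : 0 < b) (N : ℕ) :
    ∑ n ∈ range N, exp (-b * (n + 1)) * (√(n + 1) - √n) ≤ √π / (2 * √b) := by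
  have hint : IntegrableOn (fun s : ℝ => exp (-b * s ^ 2)) (Ioi 0) :=
    (integrable_exp_neg_mul_sq hb).integrableOn
  calc ∑ n ∈ range N, exp (-b * (n + 1)) * (√(n + 1) - √n)
      ≤ ∑ n ∈ range N, ∫ s in √n..√(n + 1), exp (-b * s ^ 2) :=
        sum_le_sum fun n _ => exp_neg_mul_mul_sqrt_sub_le_integral hb.le n
    _ = ∫ s in (0 : ℝ)..√N, exp (-b * s ^ 2) := by
        have := intervalIntegral.sum_integral_adjacent_intervals (a := fun n : ℕ => √n) (n := N)
          (f := fun s => exp (-b * s ^ 2)) (μ := volume) fun _ _ =>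
            (by fun_prop : Continuous fun s : ℝ => exp (-b * s ^ 2)).intervalIntegrable _ _
        push_cast at this
        simpa using this
    _ ≤ ∫ s in Ioi 0, exp (-b * s ^ 2) := by
        rw [intervalIntegral.integral_of_le (sqrt_nonneg _)]
        exact setIntegral_mono_set hint (ae_of_all _ fun s => (exp_pos _).le)
          Ioc_subset_Ioi_self.eventuallyLE
    _ = √π / (2 * √b) := by
        rw [integral_gaussian_Ioi, sqrt_div pi_pos.le]; ring

theorem one_sub_mul_sum_pow_mul_sqrt_le {a : ℝ} (ha0 : 0 < a) (ha1 : a < 1) (Q : ℕ) :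
    (1 - a) * ∑ q ∈ range Q, a ^ q * √(q + 1) ≤ 1 + √π / (2 * √(-log a)) := by
  have hpow (n : ℕ) : a ^ (n + 1) = exp (-(-log a) * (n + 1)) := by
    rw [neg_neg, mul_comm, ← Nat.cast_add_one, exp_nat_mul, exp_log ha0]
  have habel := one_sub_mul_sum_range_pow_mul_add_pow_mul a (fun q : ℕ => √q) Q
  push_cast at habel
  rw [sqrt_zero, zero_add] at habel
  have hlast : 0 ≤ a ^ Q * √Q := by positivity
  suffices ∑ q ∈ range Q, a ^ q * (√(q + 1) - √q) ≤ 1 + √π / (2 * √(-log a)) by linarith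
  rcases Q with _ | N
  · simp only [range_zero, sum_empty]; positivity
  rw [sum_range_succ', pow_zero, Nat.cast_zero, zero_add, sqrt_one, sqrt_zero, sub_zero,
    one_mul, add_comm]
  gcongr
  calc ∑ n ∈ range N, a ^ (n + 1) * (√(↑(n + 1) + 1) - √↑(n + 1))
      ≤ ∑ n ∈ range N, a ^ (n + 1) * (√(n + 1) - √n) := by
        refine sum_le_sum fun n _ => mul_le_mul_of_nonneg_left ?_ (by positivity)
        push_cast
        rw [add_assoc, one_add_one_eq_two]
        exact sqrt_add_two_sub_sqrt_add_one_le n.cast_nonneg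
    _ = ∑ n ∈ range N, exp (-(-log a) * (n + 1)) * (√(n + 1) - √n) := by
        simp only [hpow]
    _ ≤ √π / (2 * √(-log a)) :=
        sum_exp_neg_mul_mul_sqrt_sub_le (neg_pos.mpr (log_neg ha0 ha1)) N

theorem one_add_sqrt_pi_div_le {a : ℝ} (ha0 : 0 < a) (ha1 : a < 1) :
    1 + √π / (2 * √(-log a)) ≤ 2 / √(1 - a) := by
  have hs : 0 < √(1 - a) := sqrt_pos.mpr (by linarith)
  have hs1 : √(1 - a) ≤ 1 := sqrt_le_one.mpr (by linarith)
  have hlog : √(1 - a) ≤ √(-log a) := sqrt_le_sqrt (by linarith [log_le_sub_one_of_pos ha0])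
  have hpi : √π ≤ 2 := by
    rw [show (2 : ℝ) = √(2 ^ 2) by rw [sqrt_sq zero_le_two]]
    exact sqrt_le_sqrt (by linarith [pi_le_four])
  calc 1 + √π / (2 * √(-log a)) ≤ 1 / √(1 - a) + 2 / (2 * √(1 - a)) := by
        gcongr
        rw [le_div_iff₀ hs]; linarith
    _ = 2 / √(1 - a) := by field_simp; ring

/-- Sum of a geometric term times a square root: for `0 < a < 1` and `Q : ℕ`,
`∑_{q=0}^{Q−1} a^q √(q+1) ≤ (1/(1−a))(1 + √π/(2√(−ln a))) ≤ 2/(1−a)^{3/2}`. -/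
theorem sum_geom_sqrt (a : ℝ) (ha0 : 0 < a) (ha1 : a < 1) (Q : ℕ) :
    (∑ q ∈ Finset.range Q, a ^ q * Real.sqrt (q + 1))
        ≤ (1 / (1 - a)) * (1 + Real.sqrt Real.pi / (2 * Real.sqrt (-Real.log a)))
      ∧ (1 / (1 - a)) * (1 + Real.sqrt Real.pi / (2 * Real.sqrt (-Real.log a)))
        ≤ 2 / (1 - a) ^ ((3 : ℝ) / 2) := by
  have hb : 0 < 1 - a := by linarith
  constructor
  · rw [one_div_mul_eq_div, le_div_iff₀ hb, mul_comm]
    exact one_sub_mul_sum_pow_mul_sqrt_le ha0 ha1 Q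
  · have hpow : (1 - a) ^ ((3 : ℝ) / 2) = (1 - a) * √(1 - a) := by
      rw [show (3 : ℝ) / 2 = 1 + 1 / 2 by norm_num, rpow_add hb, rpow_one, sqrt_eq_rpow]
    calc 1 / (1 - a) * (1 + √π / (2 * √(-log a))) ≤ 1 / (1 - a) * (2 / √(1 - a)) := by
          gcongr; exact one_add_sqrt_pi_div_le ha0 ha1
      _ = 2 / (1 - a) ^ ((3 : ℝ) / 2) := by rw [hpow]; field_simp
end

section
/- For every real number a with 0 < a < 1 and every natural number Q, ∑_{q=0}^{Q−1} a^q √q (q+1) ≤ 4a/(1 − a)^{5/2}. -/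
/-!
Write `r ^ n √n (n + 1) ≤ √(n (n + 1) r ^ n) · √(2 n r ^ n)`, which amounts to `n + 1 ≤ 2 n` for
`n ≥ 1`. Cauchy–Schwarz then bounds the sum by the geometric mean of the moment series
`∑ n (n + 1) r ^ n = 2 r / (1 - r) ^ 3` and `∑ 2 n r ^ n = 2 r / (1 - r) ^ 2`, that is by
`2 r / (1 - r) ^ (5 / 2)`.
-/

open Finset Real

theorem hasSum_coe_mul_coe_add_one_mul_geometric_of_norm_lt_one {𝕜 : Type*} [NormedField 𝕜]
    {r : 𝕜} (hr : ‖r‖ < 1) :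
    HasSum (fun n : ℕ ↦ (n : 𝕜) * (n + 1) * r ^ n) (2 * r / (1 - r) ^ 3) := by
  have h1r : 1 - r ≠ 0 := sub_ne_zero.2 (ne_of_apply_ne norm (by simp [hr.ne']))
  have h := ((hasSum_choose_mul_geometric_of_norm_lt_one 2 hr).mul_left 2).sub
    ((hasSum_choose_mul_geometric_of_norm_lt_one 1 hr).mul_left 2)
  rw [show 2 * (1 / (1 - r) ^ (2 + 1)) - 2 * (1 / (1 - r) ^ (1 + 1)) = 2 * r / (1 - r) ^ 3 by
    field_simp; ring] at h
  refine h.congr_fun fun n ↦ ?_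
  have hchoose : ((n + 2).choose 2 * 2 : 𝕜) = (n + 2) * (n + 1) := by
    have := Nat.add_one_mul_choose_eq (n + 1) 1
    rw [Nat.choose_one_right] at this
    exact_mod_cast congrArg (Nat.cast : ℕ → 𝕜) (by lia : (n + 2).choose 2 * 2 = (n + 2) * (n + 1))
  simp only [Nat.choose_one_right]
  push_cast
  linear_combination (-r ^ n) * hchoose

theorem sum_range_pow_mul_sqrt_mul_add_one_le {r : ℝ} (hr0 : 0 ≤ r) (hr1 : r < 1) (N : ℕ) :
    ∑ n ∈ range N, r ^ n * √n * (n + 1) ≤ 2 * r / (1 - r) ^ ((5 : ℝ) / 2) := by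
  have hr : ‖r‖ < 1 := by rwa [norm_of_nonneg hr0]
  have hterm (n : ℕ) : r ^ n * √n * (n + 1) ≤ √(n * (n + 1) * r ^ n) * √(2 * (n * r ^ n)) := by
    have hnat : (n : ℝ) * (n + 1) ^ 2 ≤ n * (n + 1) * (2 * n) := by
      rcases n.eq_zero_or_pos with rfl | hpos
      · simp
      · have : (1 : ℝ) ≤ n := by exact_mod_cast hpos
        nlinarith [mul_nonneg (by positivity : (0 : ℝ) ≤ n * (n + 1)) (sub_nonneg.2 this)]
    rw [← sqrt_mul (by positivity)]
    refine le_sqrt_of_sq_le ?_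
    calc (r ^ n * √n * (n + 1)) ^ 2 = (r ^ n) ^ 2 * (n * (n + 1) ^ 2) := by
          rw [mul_pow, mul_pow, sq_sqrt n.cast_nonneg]; ring
      _ ≤ (r ^ n) ^ 2 * (n * (n + 1) * (2 * n)) := by gcongr
      _ = n * (n + 1) * r ^ n * (2 * (n * r ^ n)) := by ring
  have h1r : 0 < 1 - r := by linarith
  calc ∑ n ∈ range N, r ^ n * √n * (n + 1)
      ≤ ∑ n ∈ range N, √(n * (n + 1) * r ^ n) * √(2 * (n * r ^ n)) :=
        sum_le_sum fun n _ ↦ hterm n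
    _ ≤ √(∑ n ∈ range N, n * (n + 1) * r ^ n) * √(∑ n ∈ range N, 2 * (n * r ^ n)) :=
        sum_sqrt_mul_sqrt_le _ (fun n ↦ by positivity) (fun n ↦ by positivity)
    _ ≤ √(2 * r / (1 - r) ^ 3) * √(2 * (r / (1 - r) ^ 2)) := by
        gcongr
        · exact sum_le_hasSum _ (fun n _ ↦ by positivity)
            (hasSum_coe_mul_coe_add_one_mul_geometric_of_norm_lt_one hr)
        · exact sum_le_hasSum _ (fun n _ ↦ by positivity)
            ((hasSum_coe_mul_geometric_of_norm_lt_one hr).mul_left 2)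
    _ = 2 * r / (1 - r) ^ ((5 : ℝ) / 2) := by
        rw [← sqrt_mul (by positivity), show (5 : ℝ) / 2 = 5 * (1 / 2) by norm_num,
          rpow_mul h1r.le, ← sqrt_eq_rpow, rpow_ofNat,
          show 2 * r / (1 - r) ^ 3 * (2 * (r / (1 - r) ^ 2)) = (2 * r) ^ 2 / (1 - r) ^ 5 by
            field_simp,
          sqrt_div' _ (by positivity), sqrt_sq (by positivity)]

/-- Sum of a geometric term times roughly a power `3/2`: for `0 < a < 1` and
`Q : ℕ`, `∑_{q=0}^{Q−1} a^q √q (q+1) ≤ 4a/(1−a)^{5/2}`. -/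
theorem sum_geom_pow_three_half (a : ℝ) (ha0 : 0 < a) (ha1 : a < 1) (Q : ℕ) :
    ∑ q ∈ Finset.range Q, a ^ q * Real.sqrt q * (q + 1)
      ≤ 4 * a / (1 - a) ^ ((5 : ℝ) / 2) := by
  have h1a : 0 < 1 - a := by linarith
  calc ∑ q ∈ Finset.range Q, a ^ q * √q * (q + 1)
      ≤ 2 * a / (1 - a) ^ ((5 : ℝ) / 2) := sum_range_pow_mul_sqrt_mul_add_one_le ha0.le ha1 Q
    _ ≤ 4 * a / (1 - a) ^ ((5 : ℝ) / 2) := by gcongr; linarith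
end

section
/- Let M be a real symmetric invertible n×n matrix, let d, y ∈ ℝ^n with y ≠ 0, and let β ∈ [0, 1/3] satisfy ‖Md − M⁻¹y‖ ≤ β‖M⁻¹y‖. Set P = I − (M⁻¹y)(Md)ᵀ/(dᵀy) and α = (1 − 2β)/(1 − β²). Then: (a) (1 − β)‖M⁻¹y‖² ≤ dᵀy ≤ (1 + β)‖M⁻¹y‖²; for every nonzero real n×n matrix E, with θ = ‖E M⁻¹ y‖/(‖E‖_F ‖M⁻¹y‖): (b) ‖E(I − (M⁻¹y)(M⁻¹y)ᵀ/(dᵀy))‖_F ≤ √(1 − αθ²)·‖E‖_F; (c) ‖EP‖_F ≤ (√(1 − αθ²) + (1 − β)⁻¹·‖Md − M⁻¹y‖/‖M⁻¹y‖)·‖E‖_F; and (d) for every s ∈ ℝ^n and every real n×n matrix A, ‖(s − Ay)(Md)ᵀ/(dᵀy)‖_F ≤ 2‖s − Ay‖/‖M⁻¹y‖. -/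
/-!
Write `z = M⁻¹y` and `w = Md`. Symmetry of `M` gives `dᵀy = wᵀz = ‖z‖² + (w - z)ᵀz`, so (a) is
Cauchy–Schwarz. Row by row, `‖E(I - t zzᵀ)‖_F² = ‖E‖_F² - (2t - t²‖z‖²)‖Ez‖²`, and for
`t = 1/dᵀy` the bounds (a) make the bracket at least `α/‖z‖²`, which is (b). `EP` differs from
`E(I - t zzᵀ)` by the rank-one matrix `t (Ez)(w - z)ᵀ`, giving (c); (d) follows from
`‖w‖ ≤ (1 + β)‖z‖` and `(1 + β)/(1 - β) ≤ 2`.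
-/

open Matrix

/-- The Frobenius norm of a real matrix. -/
noncomputable def frobNorm {p q : ℕ} (A : Matrix (Fin p) (Fin q) ℝ) : ℝ :=
  Real.sqrt (∑ i, ∑ j, A i j ^ 2)

/-- The Euclidean norm of a vector in `ℝ^n`. -/
noncomputable def euclNorm {p : ℕ} (u : Fin p → ℝ) : ℝ :=
  Real.sqrt (∑ i, u i ^ 2)

section Norms

variable {p q : ℕ}

lemma euclNorm_nonneg (u : Fin p → ℝ) : 0 ≤ euclNorm u := Real.sqrt_nonneg _

lemma frobNorm_nonneg (A : Matrix (Fin p) (Fin q) ℝ) : 0 ≤ frobNorm A := Real.sqrt_nonneg _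

lemma sq_euclNorm (u : Fin p → ℝ) : euclNorm u ^ 2 = u ⬝ᵥ u := by
  rw [euclNorm, Real.sq_sqrt (Finset.sum_nonneg fun i _ => sq_nonneg _)]
  simp only [dotProduct, sq]

lemma sq_frobNorm (A : Matrix (Fin p) (Fin q) ℝ) : frobNorm A ^ 2 = ∑ i, euclNorm (A i) ^ 2 := by
  simp only [frobNorm, euclNorm]
  rw [Real.sq_sqrt (by positivity)]
  exact Finset.sum_congr rfl fun i _ => (Real.sq_sqrt (by positivity)).symm

lemma euclNorm_pos {u : Fin p → ℝ} (hu : u ≠ 0) : 0 < euclNorm u := by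
  obtain ⟨i, hi⟩ := Function.ne_iff.mp hu
  exact Real.sqrt_pos.2 <|
    Finset.sum_pos' (fun j _ => sq_nonneg _) ⟨i, Finset.mem_univ i, sq_pos_iff.2 hi⟩

lemma frobNorm_pos {A : Matrix (Fin p) (Fin q) ℝ} (hA : A ≠ 0) : 0 < frobNorm A := by
  obtain ⟨i, hi⟩ := Function.ne_iff.mp hA
  have h : 0 < frobNorm A ^ 2 := by
    rw [sq_frobNorm]
    exact Finset.sum_pos' (fun j _ => sq_nonneg _)
      ⟨i, Finset.mem_univ i, pow_pos (euclNorm_pos hi) 2⟩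
  exact lt_of_pow_lt_pow_left₀ 2 (frobNorm_nonneg A) (by simpa using h)

lemma euclNorm_eq_norm_toLp (u : Fin p → ℝ) :
    euclNorm u = ‖(WithLp.toLp 2 u : EuclideanSpace ℝ (Fin p))‖ := by
  simp only [EuclideanSpace.norm_eq, Real.norm_eq_abs, sq_abs, euclNorm]

lemma frobNorm_eq_norm_toLp (A : Matrix (Fin p) (Fin q) ℝ) :
    frobNorm A = ‖(WithLp.toLp 2 (Function.uncurry A) : EuclideanSpace ℝ (Fin p × Fin q))‖ := by
  simp only [EuclideanSpace.norm_eq, Real.norm_eq_abs, sq_abs, frobNorm, Fintype.sum_prod_type]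
  rfl

lemma euclNorm_add_le (u v : Fin p → ℝ) : euclNorm (u + v) ≤ euclNorm u + euclNorm v := by
  simp only [euclNorm_eq_norm_toLp]
  exact norm_add_le _ _

lemma frobNorm_add_le (A B : Matrix (Fin p) (Fin q) ℝ) :
    frobNorm (A + B) ≤ frobNorm A + frobNorm B := by
  simp only [frobNorm_eq_norm_toLp]
  exact norm_add_le (WithLp.toLp 2 (Function.uncurry A)) (WithLp.toLp 2 (Function.uncurry B))

lemma frobNorm_smul (c : ℝ) (A : Matrix (Fin p) (Fin q) ℝ) :
    frobNorm (c • A) = |c| * frobNorm A := by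
  simp only [frobNorm_eq_norm_toLp, ← Real.norm_eq_abs]
  exact norm_smul c (WithLp.toLp 2 (Function.uncurry A) : EuclideanSpace ℝ (Fin p × Fin q))

lemma euclNorm_smul (c : ℝ) (u : Fin p → ℝ) : euclNorm (c • u) = |c| * euclNorm u := by
  simp only [euclNorm_eq_norm_toLp, ← Real.norm_eq_abs]
  exact norm_smul c (WithLp.toLp 2 u : EuclideanSpace ℝ (Fin p))

lemma abs_dotProduct_le (u v : Fin p → ℝ) : |u ⬝ᵥ v| ≤ euclNorm u * euclNorm v := by
  have h : (u ⬝ᵥ v) ^ 2 ≤ (∑ i, u i ^ 2) * ∑ i, v i ^ 2 :=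
    Finset.sum_mul_sq_le_sq_mul_sq Finset.univ u v
  simpa only [Real.sqrt_sq_eq_abs, euclNorm,
    Real.sqrt_mul (Finset.sum_nonneg fun i _ => sq_nonneg _)] using Real.sqrt_le_sqrt h

lemma euclNorm_mulVec_le (A : Matrix (Fin p) (Fin q) ℝ) (u : Fin q → ℝ) :
    euclNorm (A *ᵥ u) ≤ frobNorm A * euclNorm u := by
  refine (pow_le_pow_iff_left₀ (euclNorm_nonneg _)
    (mul_nonneg (frobNorm_nonneg A) (euclNorm_nonneg u)) two_ne_zero).1 ?_
  rw [sq_euclNorm, mul_pow, sq_frobNorm, Finset.sum_mul]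
  refine Finset.sum_le_sum fun i _ => ?_
  rw [← sq, ← mul_pow, ← sq_abs]
  exact pow_le_pow_left₀ (abs_nonneg _) (abs_dotProduct_le (A i) u) 2

lemma frobNorm_vecMulVec (u : Fin p → ℝ) (v : Fin q → ℝ) :
    frobNorm (vecMulVec u v) = euclNorm u * euclNorm v := by
  rw [← sq_eq_sq₀ (frobNorm_nonneg _) (mul_nonneg (euclNorm_nonneg u) (euclNorm_nonneg v)),
    sq_frobNorm, mul_pow, sq_euclNorm u, dotProduct, Finset.sum_mul]
  refine Finset.sum_congr rfl fun i _ => ?_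
  have hrow : vecMulVec u v i = u i • v := by ext j; simp [vecMulVec_apply]
  rw [hrow, euclNorm_smul, mul_pow, sq_abs, sq]

lemma sq_euclNorm_sub_smul (u v : Fin p → ℝ) (t : ℝ) :
    euclNorm (u - t • v) ^ 2 = euclNorm u ^ 2 - 2 * t * (u ⬝ᵥ v) + t ^ 2 * euclNorm v ^ 2 := by
  simp only [sq_euclNorm, sub_dotProduct, dotProduct_sub, smul_dotProduct, dotProduct_smul,
    dotProduct_comm v u, smul_eq_mul]
  ring

lemma sq_frobNorm_sub_smul_vecMulVec_mulVec (A : Matrix (Fin p) (Fin q) ℝ) (u : Fin q → ℝ)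
    (t : ℝ) :
    frobNorm (A - t • vecMulVec (A *ᵥ u) u) ^ 2
      = frobNorm A ^ 2 - (2 * t - t ^ 2 * euclNorm u ^ 2) * euclNorm (A *ᵥ u) ^ 2 := by
  have hrow : ∀ i, (A - t • vecMulVec (A *ᵥ u) u) i = A i - (t * (A i ⬝ᵥ u)) • u := fun i => by
    ext j; simp [vecMulVec_apply, mulVec]; ring
  simp only [sq_frobNorm, hrow, sq_euclNorm_sub_smul]
  rw [sq_euclNorm (A *ᵥ u), dotProduct, Finset.mul_sum, ← Finset.sum_sub_distrib]
  refine Finset.sum_congr rfl fun i _ => ?_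
  change _ = _ - _ * ((A i ⬝ᵥ u) * (A i ⬝ᵥ u))
  ring

lemma mul_one_sub_smul_vecMulVec (E : Matrix (Fin p) (Fin q) ℝ) (u v : Fin q → ℝ) (t : ℝ) :
    E * (1 - t • vecMulVec u v) = E - t • vecMulVec (E *ᵥ u) v := by
  rw [Matrix.mul_sub, Matrix.mul_one, Matrix.mul_smul, mul_vecMulVec]

end Norms

section Projection

variable {p q : ℕ}

lemma dotProduct_mem_Icc_of_euclNorm_sub_le {z w : Fin p → ℝ} {β : ℝ}
    (hwz : euclNorm (w - z) ≤ β * euclNorm z) :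
    w ⬝ᵥ z ∈ Set.Icc ((1 - β) * euclNorm z ^ 2) ((1 + β) * euclNorm z ^ 2) := by
  obtain ⟨h₁, h₂⟩ := abs_le.1 <|
    (abs_dotProduct_le (w - z) z).trans (mul_le_mul_of_nonneg_right hwz (euclNorm_nonneg z))
  rw [sub_dotProduct, ← sq_euclNorm] at h₁ h₂
  constructor <;> linarith

lemma one_sub_two_mul_div_one_sub_sq_le {β c N : ℝ} (hβ0 : 0 ≤ β) (hβ3 : β ≤ 1 / 3)
    (hN : 0 < N) (hc₁ : (1 - β) * N ≤ c) (hc₂ : c ≤ (1 + β) * N) :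
    (1 - 2 * β) / (1 - β ^ 2) ≤ (2 * c⁻¹ - c⁻¹ ^ 2 * N) * N := by
  have hc : 0 < c := lt_of_lt_of_le (by nlinarith) hc₁
  have hrhs : (2 * c⁻¹ - c⁻¹ ^ 2 * N) * N = (2 * c - N) * N / c ^ 2 := by field_simp
  rw [hrhs, div_le_div_iff₀ (by nlinarith) (by positivity)]
  -- the difference of the two sides is
  -- `(1 - 2β)(c - (1 - β)N)((1 + β)N - c) + 2βN(c(2 - β) - (1 - β²)N)`
  have hmid : 0 ≤ c * (2 - β) - (1 - β ^ 2) * N := by nlinarith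
  linarith [mul_nonneg (by linarith : (0 : ℝ) ≤ 1 - 2 * β)
      (mul_nonneg (by linarith : 0 ≤ c - (1 - β) * N) (by linarith : 0 ≤ (1 + β) * N - c)),
    mul_nonneg hβ0 (mul_nonneg hN.le hmid)]

lemma frobNorm_mul_one_sub_smul_vecMulVec_self_le {E : Matrix (Fin p) (Fin q) ℝ} (hE : E ≠ 0)
    {z : Fin q → ℝ} (hz : z ≠ 0) {t α : ℝ}
    (hα : α ≤ (2 * t - t ^ 2 * euclNorm z ^ 2) * euclNorm z ^ 2) :
    frobNorm (E * (1 - t • vecMulVec z z))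
      ≤ √(1 - α * (euclNorm (E *ᵥ z) / (frobNorm E * euclNorm z)) ^ 2) * frobNorm E := by
  have hZ := euclNorm_pos hz
  have hθ : α * (euclNorm (E *ᵥ z) / (frobNorm E * euclNorm z)) ^ 2 * frobNorm E ^ 2
      = α / euclNorm z ^ 2 * euclNorm (E *ᵥ z) ^ 2 := by
    field_simp [(frobNorm_pos hE).ne']
  have hsq : frobNorm (E * (1 - t • vecMulVec z z)) ^ 2
      ≤ (1 - α * (euclNorm (E *ᵥ z) / (frobNorm E * euclNorm z)) ^ 2) * frobNorm E ^ 2 := by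
    rw [mul_one_sub_smul_vecMulVec, sq_frobNorm_sub_smul_vecMulVec_mulVec, sub_mul 1, one_mul,
      hθ]
    gcongr
    exact (div_le_iff₀ (by positivity)).2 hα
  calc frobNorm (E * (1 - t • vecMulVec z z))
      = √(frobNorm (E * (1 - t • vecMulVec z z)) ^ 2) :=
        (Real.sqrt_sq (frobNorm_nonneg _)).symm
    _ ≤ √((1 - α * (euclNorm (E *ᵥ z) / (frobNorm E * euclNorm z)) ^ 2) * frobNorm E ^ 2) :=
      Real.sqrt_le_sqrt hsq
    _ = _ := by rw [Real.sqrt_mul' _ (sq_nonneg _), Real.sqrt_sq (frobNorm_nonneg E)]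

lemma frobNorm_mul_one_sub_smul_vecMulVec_le (E : Matrix (Fin p) (Fin q) ℝ) (z w : Fin q → ℝ)
    (t : ℝ) :
    frobNorm (E * (1 - t • vecMulVec z w))
      ≤ frobNorm (E * (1 - t • vecMulVec z z))
          + |t| * (frobNorm E * euclNorm z) * euclNorm (w - z) := by
  have hsplit : E * (1 - t • vecMulVec z w)
      = E * (1 - t • vecMulVec z z) + (-t) • vecMulVec (E *ᵥ z) (w - z) := by
    rw [mul_one_sub_smul_vecMulVec, mul_one_sub_smul_vecMulVec, vecMulVec_sub, neg_smul,
      smul_sub]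
    abel
  calc frobNorm (E * (1 - t • vecMulVec z w))
      ≤ frobNorm (E * (1 - t • vecMulVec z z))
          + |t| * (euclNorm (E *ᵥ z) * euclNorm (w - z)) := by
        rw [hsplit, ← abs_neg t, ← frobNorm_vecMulVec, ← frobNorm_smul]
        exact frobNorm_add_le _ _
    _ ≤ _ := by
      rw [← mul_assoc]
      gcongr
      exacts [euclNorm_nonneg _, euclNorm_mulVec_le E z]

lemma frobNorm_smul_vecMulVec_le (u : Fin q → ℝ) {z w : Fin p → ℝ} (hz : z ≠ 0) {β t : ℝ}
    (hβ3 : β ≤ 1 / 3) (hwz : euclNorm (w - z) ≤ β * euclNorm z) (ht₀ : 0 ≤ t)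
    (ht : t ≤ ((1 - β) * euclNorm z ^ 2)⁻¹) :
    frobNorm (t • vecMulVec u w) ≤ 2 * euclNorm u / euclNorm z := by
  have hZ := euclNorm_pos hz
  have hw : euclNorm w ≤ (1 + β) * euclNorm z := by
    calc euclNorm w = euclNorm (z + (w - z)) := by rw [add_sub_cancel]
      _ ≤ euclNorm z + euclNorm (w - z) := euclNorm_add_le _ _
      _ ≤ (1 + β) * euclNorm z := by linarith
  have hβ : 0 < 1 - β := by linarith
  rw [frobNorm_smul, frobNorm_vecMulVec, abs_of_nonneg ht₀]
  calc t * (euclNorm u * euclNorm w)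
      ≤ ((1 - β) * euclNorm z ^ 2)⁻¹ * (euclNorm u * ((1 + β) * euclNorm z)) := by
        gcongr
        exacts [mul_nonneg (euclNorm_nonneg u) (euclNorm_nonneg w), euclNorm_nonneg u]
    _ = (1 + β) / (1 - β) * euclNorm u / euclNorm z := by field_simp
    _ ≤ 2 * euclNorm u / euclNorm z := by
      gcongr
      · exact euclNorm_nonneg u
      · rw [div_le_iff₀ hβ]; linarith

end Projection

/-- Quantitative bounds for the BFGS projection matrix
`P = I − (M⁻¹y)(Md)ᵀ/(dᵀy)` under the closeness assumption `‖Md − M⁻¹y‖ ≤ β‖M⁻¹y‖`,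
`β ∈ [0, 1/3]`: parts (a)–(d). -/
theorem bfgs_projection_bounds {n : ℕ}
    (M : Matrix (Fin n) (Fin n) ℝ) (hM_symm : Mᵀ = M) (hM_inv : IsUnit M.det)
    (dvec y : Fin n → ℝ) (hy : y ≠ 0)
    (β : ℝ) (hβ0 : 0 ≤ β) (hβ3 : β ≤ 1 / 3)
    (hclose : euclNorm (M *ᵥ dvec - M⁻¹ *ᵥ y) ≤ β * euclNorm (M⁻¹ *ᵥ y))
    (P : Matrix (Fin n) (Fin n) ℝ)
    (hP : P = 1 - (dvec ⬝ᵥ y)⁻¹ • vecMulVec (M⁻¹ *ᵥ y) (M *ᵥ dvec))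
    (α : ℝ) (hα : α = (1 - 2 * β) / (1 - β ^ 2)) :
    -- (a)
    ((1 - β) * euclNorm (M⁻¹ *ᵥ y) ^ 2 ≤ dvec ⬝ᵥ y
        ∧ dvec ⬝ᵥ y ≤ (1 + β) * euclNorm (M⁻¹ *ᵥ y) ^ 2)
    -- (b) and (c)
    ∧ (∀ E : Matrix (Fin n) (Fin n) ℝ, E ≠ 0 →
        (frobNorm (E * (1 - (dvec ⬝ᵥ y)⁻¹ • vecMulVec (M⁻¹ *ᵥ y) (M⁻¹ *ᵥ y)))
          ≤ Real.sqrt (1 - α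
                * (euclNorm (E *ᵥ (M⁻¹ *ᵥ y)) / (frobNorm E * euclNorm (M⁻¹ *ᵥ y))) ^ 2)
              * frobNorm E)
        ∧ (frobNorm (E * P)
          ≤ (Real.sqrt (1 - α
                * (euclNorm (E *ᵥ (M⁻¹ *ᵥ y)) / (frobNorm E * euclNorm (M⁻¹ *ᵥ y))) ^ 2)
              + (1 - β)⁻¹ * (euclNorm (M *ᵥ dvec - M⁻¹ *ᵥ y) / euclNorm (M⁻¹ *ᵥ y)))
              * frobNorm E))
    -- (d)
    ∧ (∀ (s : Fin n → ℝ) (A : Matrix (Fin n) (Fin n) ℝ),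
        frobNorm ((dvec ⬝ᵥ y)⁻¹ • vecMulVec (s - A *ᵥ y) (M *ᵥ dvec))
          ≤ 2 * euclNorm (s - A *ᵥ y) / euclNorm (M⁻¹ *ᵥ y)) := by
  have hMz : M *ᵥ (M⁻¹ *ᵥ y) = y := by
    rw [mulVec_mulVec, mul_nonsing_inv M hM_inv, one_mulVec]
  have hc : dvec ⬝ᵥ y = (M *ᵥ dvec) ⬝ᵥ (M⁻¹ *ᵥ y) := by
    have hvM : dvec ᵥ* M = M *ᵥ dvec := by rw [← vecMul_transpose, hM_symm]
    rw [← hvM, ← dotProduct_mulVec, hMz]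
  set z := M⁻¹ *ᵥ y
  set w := M *ᵥ dvec
  have hz : z ≠ 0 := fun h => hy (by rw [← hMz, h, mulVec_zero])
  have hZ := euclNorm_pos hz
  have ha : (1 - β) * euclNorm z ^ 2 ≤ dvec ⬝ᵥ y ∧ dvec ⬝ᵥ y ≤ (1 + β) * euclNorm z ^ 2 :=
    hc ▸ dotProduct_mem_Icc_of_euclNorm_sub_le hclose
  have hlow : 0 < (1 - β) * euclNorm z ^ 2 := mul_pos (by linarith) (pow_pos hZ 2)
  have ht₀ : 0 ≤ (dvec ⬝ᵥ y)⁻¹ := inv_nonneg.2 (hlow.le.trans ha.1)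
  have ht : (dvec ⬝ᵥ y)⁻¹ ≤ ((1 - β) * euclNorm z ^ 2)⁻¹ := inv_anti₀ hlow ha.1
  refine ⟨ha, fun E hE => ?_, fun s A => frobNorm_smul_vecMulVec_le _ hz hβ3 hclose ht₀ ht⟩
  have hb := frobNorm_mul_one_sub_smul_vecMulVec_self_le hE hz
    (hα ▸ one_sub_two_mul_div_one_sub_sq_le hβ0 hβ3 (pow_pos hZ 2) ha.1 ha.2)
  refine ⟨hb, ?_⟩
  calc frobNorm (E * P)
      ≤ frobNorm (E * (1 - (dvec ⬝ᵥ y)⁻¹ • vecMulVec z z))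
          + |(dvec ⬝ᵥ y)⁻¹| * (frobNorm E * euclNorm z) * euclNorm (w - z) :=
        hP ▸ frobNorm_mul_one_sub_smul_vecMulVec_le E z w _
    _ ≤ √(1 - α * (euclNorm (E *ᵥ z) / (frobNorm E * euclNorm z)) ^ 2) * frobNorm E
          + ((1 - β) * euclNorm z ^ 2)⁻¹ * (frobNorm E * euclNorm z) * euclNorm (w - z) := by
        rw [abs_of_nonneg ht₀]
        gcongr
        exacts [euclNorm_nonneg _, mul_nonneg (frobNorm_nonneg E) (euclNorm_nonneg z)]
    _ = _ := by field_simp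
end

section
/- Let f : ℝ^d → ℝ be differentiable and M-Lipschitz, and let μ : ℝ^d → [0, ∞) be an integrable probability density (∫_{ℝ^d} μ(z) dz = 1, with respect to Lebesgue measure). Then for all u, v ∈ ℝ^d, ‖ ∫ ∇f(u + z) μ(z) dz − ∫ ∇f(v + z) μ(z) dz ‖ ≤ M · ∫ |μ(z − u) − μ(z − v)| dz. -/
open MeasureTheory

/-- For an `M`-Lipschitz differentiable `f` and a probability density `μ`
on `ℝ^d`, `‖∫ ∇f(u+z) μ(z) dz − ∫ ∇f(v+z) μ(z) dz‖ ≤ M ∫ |μ(z−u) − μ(z−v)| dz`. -/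
theorem smoothing_gradient_difference_bound {d : ℕ}
    (f : EuclideanSpace ℝ (Fin d) → ℝ) (M : ℝ)
    (hdiff : Differentiable ℝ f)
    (hlip : ∀ x y, |f x - f y| ≤ M * ‖x - y‖)
    (μ : EuclideanSpace ℝ (Fin d) → ℝ)
    (hμ_nonneg : ∀ z, 0 ≤ μ z)
    (hμ_int : Integrable μ)
    (hμ_one : ∫ z, μ z = 1)
    (u v : EuclideanSpace ℝ (Fin d)) :
    ‖(∫ z, μ z • gradient f (u + z)) - ∫ z, μ z • gradient f (v + z)‖
      ≤ M * ∫ z, |μ (z - u) - μ (z - v)| := by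
  by_cases hM : 0 ≤ M
  · -- main case
    -- Lipschitz as `LipschitzWith`
    have hlipW : LipschitzWith M.toNNReal f := by
      apply LipschitzWith.of_dist_le_mul
      intro x y
      rw [Real.coe_toNNReal _ hM, Real.dist_eq, dist_eq_norm]
      exact hlip x y
    -- gradient bound
    have hgb : ∀ x : EuclideanSpace ℝ (Fin d), ‖gradient f x‖ ≤ M := by
      intro x
      have : ‖gradient f x‖ = ‖fderiv ℝ f x‖ := by
        rw [gradient, LinearIsometryEquiv.norm_map]
      rw [this]
      simpa [Real.coe_toNNReal _ hM] using norm_fderiv_le_of_lipschitz ℝ hlipW (x₀ := x)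
    have hgm : Measurable (gradient f) :=
      ((InnerProductSpace.toDual ℝ (EuclideanSpace ℝ (Fin d))).symm.continuous.measurable).comp
        (measurable_fderiv ℝ f)
    -- integrability of μ(· - w)
    have hμw : ∀ w : EuclideanSpace ℝ (Fin d), Integrable (fun z => μ (z - w)) := by
      intro w
      simpa [sub_eq_add_neg] using hμ_int.comp_add_right (-w)
    -- integrability of the shifted products
    have Iw : ∀ w : EuclideanSpace ℝ (Fin d), Integrable (fun z => μ (z - w) • gradient f z) := by
      intro w
      refine Integrable.mono' (((hμw w).abs).const_mul M)
        (((hμw w).aestronglyMeasurable).smul hgm.aestronglyMeasurable)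
        (Filter.Eventually.of_forall fun z => ?_)
      rw [norm_smul, Real.norm_eq_abs, mul_comm]
      exact mul_le_mul (hgb z) le_rfl (abs_nonneg _) hM
    -- change of variables
    have key : ∀ w : EuclideanSpace ℝ (Fin d), (∫ z, μ (z - w) • gradient f z) = ∫ z, μ z • gradient f (w + z) := by
      intro w
      rw [← integral_add_right_eq_self (fun z => μ (z - w) • gradient f z) w]
      simp [add_sub_cancel_right, add_comm]
    rw [← key u, ← key v, ← integral_sub (Iw u) (Iw v)]
    have heq : ∀ z : EuclideanSpace ℝ (Fin d), μ (z - u) • gradient f z - μ (z - v) • gradient f z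
        = (μ (z - u) - μ (z - v)) • gradient f z := fun z => (sub_smul _ _ _).symm
    simp_rw [heq]
    calc ‖∫ z, (μ (z - u) - μ (z - v)) • gradient f z‖
        ≤ ∫ z, ‖(μ (z - u) - μ (z - v)) • gradient f z‖ :=
          norm_integral_le_integral_norm _
      _ ≤ ∫ z, M * |μ (z - u) - μ (z - v)| := by
          refine integral_mono (by
            simpa [heq] using ((Iw u).sub (Iw v)).norm)
            ((((hμw u).sub (hμw v)).abs).const_mul M) fun z => ?_
          rw [norm_smul, Real.norm_eq_abs, mul_comm]
          exact mul_le_mul (hgb z) le_rfl (abs_nonneg _) hM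
      _ = M * ∫ z, |μ (z - u) - μ (z - v)| := integral_const_mul _ _
  · -- degenerate case: M < 0 forces u = v
    push_neg at hM
    have huv : u = v := by
      by_contra h
      have h1 : 0 < ‖u - v‖ := by
        rw [norm_pos_iff]
        exact sub_ne_zero.mpr h
      have h2 := hlip u v
      nlinarith [abs_nonneg (f u - f v)]
    subst huv
    simp
end
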